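/- Betweenness reduces to simultaneous two-level crossing-freeness: if (S, X) is a positive instance of Betweenness, witnessed by a linear order ≺ on S, then the instance ⟨G1, G2, G3⟩ of the previous construction admits linear orders on levels l_1 and l_2 such that: (i) vertices u_{1,1},…,u_{1,n},…,u_{k,1},…,u_{k,n} appear in this order on l_1 (with each block u_{i,·} ordered according to ≺); (ii) vertices v_{1,1},…,v_{1,n},…,v_{k−1,1},…,v_{k−1,n} appear in this order on l_2; (iii) x_i and y_i precede x_{i+1} and y_{i+1} on l_2; (iv) x_i precedes y_i iff s_{a_i} ≺ s_{c_i}; and under these orders no two edges of the same graph G1, G2, or G3 cross. -/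

import Mathlib

/-!
Put block `i` of each level into the unit interval `[i, i + 1)` and order every block by `≺`,
transported to `(0, 1)` by the sigmoid of `p`, with `x_i` and `y_i` after the `v`-block on `l_2`.
An edge of `G1` or `G2` joins two vertices with the same lexicographic key (block, `≺`), so two
such edges never cross. Edges of different triplet gadgets lie in disjoint blocks on both levels,
and inside one gadget betweenness makes both endpoint sequences along the path
`u_a, x, u_b, y, u_c` monotone (or both antitone), which rules out a crossing.
-/

/-- Two edges `(a,b)` and `(a',b')` between two levels cross. -/
def Cross (a b a' b' : ℝ) : Prop := (a < a' ∧ b' < b) ∨ (a' < a ∧ b < b')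

/-- Level-1 endpoint of the `q`-th edge (`q < 4`) of the `i`-th triplet gadget
`T_i = (u_{i,a i}, x_i, u_{i,b i}, y_i, u_{i,c i})`. -/
def tripL (σu : ℕ → ℕ → ℝ) (a b c : ℕ → ℕ) (i q : ℕ) : ℝ :=
  if q = 0 then σu i (a i) else if q = 1 then σu i (b i)
  else if q = 2 then σu i (b i) else σu i (c i)

/-- Level-2 endpoint of the `q`-th edge of the `i`-th triplet gadget. -/
def tripR (σx σy : ℕ → ℝ) (i q : ℕ) : ℝ :=
  if q ≤ 1 then σx i else σy i

open Set

section Blocks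

variable {i i' : ℕ} {r r' x y : ℝ}

lemma lt_of_mem_Ico_natCast_of_lt (hx : x ∈ Ico (i : ℝ) (i + 1)) (hy : y ∈ Ico (i' : ℝ) (i' + 1))
    (h : i < i') : x < y := by
  have : (i : ℝ) + 1 ≤ i' := by exact_mod_cast h
  linarith [hx.2, hy.1]

lemma natCast_add_mem_Ico (hr : r ∈ Ico (0 : ℝ) 1) : (i : ℝ) + r ∈ Ico (i : ℝ) (i + 1) :=
  ⟨by linarith [hr.1], by linarith [hr.2]⟩

lemma natCast_add_lt_natCast_add_iff (hr : r ∈ Ico (0 : ℝ) 1) (hr' : r' ∈ Ico (0 : ℝ) 1) :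
    (i : ℝ) + r < i' + r' ↔ i < i' ∨ i = i' ∧ r < r' := by
  rcases lt_trichotomy i i' with h | rfl | h
  · exact iff_of_true (lt_of_mem_Ico_natCast_of_lt (natCast_add_mem_Ico hr)
      (natCast_add_mem_Ico hr') h) (Or.inl h)
  · simp
  · refine iff_of_false (lt_asymm (lt_of_mem_Ico_natCast_of_lt (natCast_add_mem_Ico hr')
      (natCast_add_mem_Ico hr) h)) ?_
    omega

lemma natCast_add_inj (hr : r ∈ Ico (0 : ℝ) 1) (hr' : r' ∈ Ico (0 : ℝ) 1)
    (h : (i : ℝ) + r = i' + r') : i = i' ∧ r = r' := by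
  have hlt := (natCast_add_lt_natCast_add_iff (i := i) (i' := i') hr hr').not.mp h.not_lt
  have hgt := (natCast_add_lt_natCast_add_iff (i := i') (i' := i) hr' hr).not.mp h.not_gt
  have hi : i = i' := by omega
  subst hi
  exact ⟨rfl, by linarith⟩

end Blocks

section Crossing

variable {a b a' b' : ℝ}

lemma cross_comm : Cross a b a' b' ↔ Cross a' b' a b := Or.comm

lemma not_cross_of_le_of_le (ha : a ≤ a') (hb : b ≤ b') : ¬ Cross a b a' b' := by
  rintro (⟨-, h⟩ | ⟨h, -⟩) <;> linarith

lemma not_cross_of_lt_iff_lt (h : a < a' ↔ b < b') (h' : a' < a ↔ b' < b) :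
    ¬ Cross a b a' b' := by
  rintro (⟨ha, hb⟩ | ⟨ha, hb⟩)
  · exact lt_asymm (h.mp ha) hb
  · exact lt_asymm (h'.mp ha) hb

variable {α : Type*} [LinearOrder α] {f g : α → ℝ}

lemma Monotone.not_cross (hf : Monotone f) (hg : Monotone g) (x y : α) :
    ¬ Cross (f x) (g x) (f y) (g y) := by
  rcases le_total x y with h | h
  · exact not_cross_of_le_of_le (hf h) (hg h)
  · exact cross_comm.not.mpr (not_cross_of_le_of_le (hf h) (hg h))

lemma Antitone.not_cross (hf : Antitone f) (hg : Antitone g) (x y : α) :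
    ¬ Cross (f x) (g x) (f y) (g y) :=
  hf.dual_left.not_cross hg.dual_left (OrderDual.toDual x) (OrderDual.toDual y)

end Crossing

section Triplet

variable {σu : ℕ → ℕ → ℝ} {σx σy : ℕ → ℝ} {a b c : ℕ → ℕ} {i : ℕ}

lemma tripL_monotone (hab : σu i (a i) ≤ σu i (b i)) (hbc : σu i (b i) ≤ σu i (c i)) :
    Monotone (tripL σu a b c i) := by
  refine monotone_nat_of_le_succ fun q => ?_
  rcases q with _ | _ | _ | q <;> simp [tripL, hab, hbc]

lemma tripL_antitone (hba : σu i (b i) ≤ σu i (a i)) (hcb : σu i (c i) ≤ σu i (b i)) :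
    Antitone (tripL σu a b c i) := by
  refine antitone_nat_of_succ_le fun q => ?_
  rcases q with _ | _ | _ | q <;> simp [tripL, hba, hcb]

lemma tripR_monotone (h : σx i ≤ σy i) : Monotone (tripR σx σy i) := by
  refine monotone_nat_of_le_succ fun q => ?_
  rcases q with _ | _ | q <;> simp [tripR, h]

lemma tripR_antitone (h : σy i ≤ σx i) : Antitone (tripR σx σy i) := by
  refine antitone_nat_of_succ_le fun q => ?_
  rcases q with _ | _ | q <;> simp [tripR, h]

lemma tripL_mem {s : Set ℝ} (h : ∀ j, σu i j ∈ s) (q : ℕ) : tripL σu a b c i q ∈ s := by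
  unfold tripL
  split_ifs <;> apply h

lemma tripR_mem {s : Set ℝ} (hx : σx i ∈ s) (hy : σy i ∈ s) (q : ℕ) :
    tripR σx σy i q ∈ s := by
  unfold tripR
  split_ifs <;> assumption

end Triplet

section Positions

variable (p : ℕ → ℝ) (a c : ℕ → ℕ)

noncomputable def uPos (i j : ℕ) : ℝ := i + Real.sigmoid (p j)

noncomputable def vPos (i j : ℕ) : ℝ := i + Real.sigmoid (p j) / 2

noncomputable def xPos (i : ℕ) : ℝ := i + if p (a i) < p (c i) then 1 / 2 else 3 / 4

noncomputable def yPos (i : ℕ) : ℝ := i + if p (a i) < p (c i) then 3 / 4 else 1 / 2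

variable {p a c} {i i' j j' : ℕ}

lemma sigmoid_mem_Ico (t : ℝ) : Real.sigmoid t ∈ Ico (0 : ℝ) 1 :=
  ⟨(Real.sigmoid_pos t).le, Real.sigmoid_lt_one t⟩

lemma half_sigmoid_mem_Ico (t : ℝ) : Real.sigmoid t / 2 ∈ Ico (0 : ℝ) 1 :=
  ⟨by linarith [Real.sigmoid_pos t], by linarith [Real.sigmoid_lt_one t]⟩

lemma xOffset_mem_Ico : (if p (a i) < p (c i) then (1 / 2 : ℝ) else 3 / 4) ∈ Ico (0 : ℝ) 1 := by
  split_ifs <;> norm_num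

lemma yOffset_mem_Ico : (if p (a i) < p (c i) then (3 / 4 : ℝ) else 1 / 2) ∈ Ico (0 : ℝ) 1 := by
  split_ifs <;> norm_num

lemma uPos_mem_Ico : uPos p i j ∈ Ico (i : ℝ) (i + 1) := natCast_add_mem_Ico (sigmoid_mem_Ico _)

lemma xPos_mem_Ico : xPos p a c i ∈ Ico (i : ℝ) (i + 1) := natCast_add_mem_Ico xOffset_mem_Ico

lemma yPos_mem_Ico : yPos p a c i ∈ Ico (i : ℝ) (i + 1) := natCast_add_mem_Ico yOffset_mem_Ico

lemma uPos_lt_uPos_iff : uPos p i j < uPos p i' j' ↔ i < i' ∨ i = i' ∧ p j < p j' := by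
  rw [uPos, uPos, natCast_add_lt_natCast_add_iff (sigmoid_mem_Ico _) (sigmoid_mem_Ico _),
    Real.sigmoid_strictMono.lt_iff_lt]

lemma vPos_lt_vPos_iff : vPos p i j < vPos p i' j' ↔ i < i' ∨ i = i' ∧ p j < p j' := by
  rw [vPos, vPos, natCast_add_lt_natCast_add_iff (half_sigmoid_mem_Ico _) (half_sigmoid_mem_Ico _),
    div_lt_div_iff_of_pos_right two_pos, Real.sigmoid_strictMono.lt_iff_lt]

lemma xPos_injective : Function.Injective (xPos p a c) := fun _ _ h =>
  (natCast_add_inj xOffset_mem_Ico xOffset_mem_Ico h).1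

lemma yPos_injective : Function.Injective (yPos p a c) := fun _ _ h =>
  (natCast_add_inj yOffset_mem_Ico yOffset_mem_Ico h).1

lemma xPos_ne_yPos : xPos p a c i ≠ yPos p a c i' := by
  intro h
  obtain ⟨rfl, h⟩ := natCast_add_inj xOffset_mem_Ico yOffset_mem_Ico h
  split_ifs at h <;> norm_num at h

lemma xPos_ne_vPos : xPos p a c i ≠ vPos p i' j := by
  intro h
  obtain ⟨-, h⟩ := natCast_add_inj xOffset_mem_Ico (half_sigmoid_mem_Ico _) h
  have := Real.sigmoid_lt_one (p j)
  split_ifs at h <;> linarith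

lemma yPos_ne_vPos : yPos p a c i ≠ vPos p i' j := by
  intro h
  obtain ⟨-, h⟩ := natCast_add_inj yOffset_mem_Ico (half_sigmoid_mem_Ico _) h
  have := Real.sigmoid_lt_one (p j)
  split_ifs at h <;> linarith

lemma xPos_lt_yPos_iff : xPos p a c i < yPos p a c i ↔ p (a i) < p (c i) := by
  unfold xPos yPos
  split_ifs with h <;> norm_num [h]

end Positions

section Gadgets

variable {p : ℕ → ℝ} {a b c : ℕ → ℕ} {i i' : ℕ}

lemma not_cross_triplet_self
    (hbet : (p (a i) < p (b i) ∧ p (b i) < p (c i)) ∨ (p (c i) < p (b i) ∧ p (b i) < p (a i)))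
    (q q' : ℕ) :
    ¬ Cross (tripL (uPos p) a b c i q) (tripR (xPos p a c) (yPos p a c) i q)
      (tripL (uPos p) a b c i q') (tripR (xPos p a c) (yPos p a c) i q') := by
  have hu : ∀ {j j'}, p j < p j' → uPos p i j ≤ uPos p i j' := fun h =>
    (uPos_lt_uPos_iff.mpr (Or.inr ⟨rfl, h⟩)).le
  rcases hbet with ⟨hab, hbc⟩ | ⟨hcb, hba⟩
  · exact (tripL_monotone (hu hab) (hu hbc)).not_cross
      (tripR_monotone (xPos_lt_yPos_iff.mpr (hab.trans hbc)).le) q q'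
  · exact (tripL_antitone (hu hba) (hu hcb)).not_cross
      (tripR_antitone (not_lt.mp (xPos_lt_yPos_iff.not.mpr (hcb.trans hba).not_gt))) q q'

lemma not_cross_triplet_of_lt (h : i < i') (q q' : ℕ) :
    ¬ Cross (tripL (uPos p) a b c i q) (tripR (xPos p a c) (yPos p a c) i q)
      (tripL (uPos p) a b c i' q') (tripR (xPos p a c) (yPos p a c) i' q') :=
  not_cross_of_le_of_le
    (lt_of_mem_Ico_natCast_of_lt (tripL_mem (fun _ => uPos_mem_Ico) q)
      (tripL_mem (fun _ => uPos_mem_Ico) q') h).le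
    (lt_of_mem_Ico_natCast_of_lt (tripR_mem xPos_mem_Ico yPos_mem_Ico q)
      (tripR_mem xPos_mem_Ico yPos_mem_Ico q') h).le

end Gadgets

theorem betweenness_to_simultaneous_general
    (n k : ℕ) (a b c : ℕ → ℕ)
    (p : ℕ → ℝ)
    (hbet : ∀ i, i < k →
      (p (a i) < p (b i) ∧ p (b i) < p (c i)) ∨
      (p (c i) < p (b i) ∧ p (b i) < p (a i))) :
    ∃ (σu σv : ℕ → ℕ → ℝ) (σx σy : ℕ → ℝ),
      -- level-2 positions of distinct vertices are distinct
      (∀ i i', i < k → i' < k → σx i = σx i' → i = i') ∧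
      (∀ i i', i < k → i' < k → σy i = σy i' → i = i') ∧
      (∀ i i', i < k → i' < k → σx i ≠ σy i') ∧
      (∀ i i' j, i < k → i' < k - 1 → j < n → σx i ≠ σv i' j ∧ σy i ≠ σv i' j) ∧
      -- (i) the u-blocks appear in order of i, each block ordered according to ≺
      (∀ i j i' j', i < k → j < n → i' < k → j' < n →
        (σu i j < σu i' j' ↔ (i < i' ∨ (i = i' ∧ p j < p j')))) ∧
      -- (ii) the v-blocks appear in order of i, each block ordered according to ≺
      (∀ i j i' j', i < k - 1 → j < n → i' < k - 1 → j' < n →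
        (σv i j < σv i' j' ↔ (i < i' ∨ (i = i' ∧ p j < p j')))) ∧
      -- (iii) x_i and y_i precede x_{i+1} and y_{i+1}
      (∀ i, i + 1 < k → σx i < σx (i + 1) ∧ σx i < σy (i + 1) ∧
        σy i < σx (i + 1) ∧ σy i < σy (i + 1)) ∧
      -- (iv) x_i precedes y_i iff s_{a i} ≺ s_{c i}
      (∀ i, i < k → (σx i < σy i ↔ p (a i) < p (c i))) ∧
      -- no two edges of G1 cross
      (∀ i j i' j', i < k - 1 → j < n → i' < k - 1 → j' < n →
        ¬ Cross (σu i j) (σv i j) (σu i' j') (σv i' j')) ∧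
      -- no two edges of G2 cross
      (∀ i j i' j', i < k - 1 → j < n → i' < k - 1 → j' < n →
        ¬ Cross (σu (i + 1) j) (σv i j) (σu (i' + 1) j') (σv i' j')) ∧
      -- no two edges of G3 cross
      (∀ i q i' q', i < k → q < 4 → i' < k → q' < 4 → (i, q) ≠ (i', q') →
        ¬ Cross (tripL σu a b c i q) (tripR σx σy i q)
                (tripL σu a b c i' q') (tripR σx σy i' q')) := by
  refine ⟨uPos p, vPos p, xPos p a c, yPos p a c,
    fun _ _ _ _ h => xPos_injective h, fun _ _ _ _ h => yPos_injective h,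
    fun _ _ _ _ => xPos_ne_yPos, fun _ _ _ _ _ _ => ⟨xPos_ne_vPos, yPos_ne_vPos⟩,
    fun _ _ _ _ _ _ _ _ => uPos_lt_uPos_iff, fun _ _ _ _ _ _ _ _ => vPos_lt_vPos_iff,
    fun i _ => ?_, fun _ _ => xPos_lt_yPos_iff, ?_, ?_, ?_⟩
  · have h := Nat.lt_succ_self i
    exact ⟨lt_of_mem_Ico_natCast_of_lt xPos_mem_Ico xPos_mem_Ico h,
      lt_of_mem_Ico_natCast_of_lt xPos_mem_Ico yPos_mem_Ico h,
      lt_of_mem_Ico_natCast_of_lt yPos_mem_Ico xPos_mem_Ico h,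
      lt_of_mem_Ico_natCast_of_lt yPos_mem_Ico yPos_mem_Ico h⟩
  · exact fun _ _ _ _ _ _ _ _ => not_cross_of_lt_iff_lt
      (uPos_lt_uPos_iff.trans vPos_lt_vPos_iff.symm) (uPos_lt_uPos_iff.trans vPos_lt_vPos_iff.symm)
  · refine fun _ _ _ _ _ _ _ _ => not_cross_of_lt_iff_lt ?_ ?_ <;>
      simp only [uPos_lt_uPos_iff, vPos_lt_vPos_iff, add_lt_add_iff_right, add_left_inj]
  · intro i q i' q' hi _ _ _ _
    rcases lt_trichotomy i i' with h | rfl | h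
    · exact not_cross_triplet_of_lt h q q'
    · exact not_cross_triplet_self (hbet i hi) q q'
    · exact cross_comm.not.mpr (not_cross_triplet_of_lt h q' q)

/-- if `(S, X)` is a positive instance of Betweenness, witnessed by the linear
order given by injective `p` (`j ≺ j' ↔ p j < p j'`), then the constructed instance
`⟨G1, G2, G3⟩` admits linear orders on the two levels satisfying properties (i)–(iv) and in
which no two edges of the same graph cross. -/
theorem betweenness_to_simultaneous
    (n k : ℕ) (a b c : ℕ → ℕ)
    (ha : ∀ i, i < k → a i < n) (hb : ∀ i, i < k → b i < n) (hc : ∀ i, i < k → c i < n)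
    (hdis : ∀ i, i < k → a i ≠ b i ∧ b i ≠ c i ∧ a i ≠ c i)
    (p : ℕ → ℝ)
    (hpinj : ∀ j j', j < n → j' < n → p j = p j' → j = j')
    (hbet : ∀ i, i < k →
      (p (a i) < p (b i) ∧ p (b i) < p (c i)) ∨
      (p (c i) < p (b i) ∧ p (b i) < p (a i))) :
    ∃ (σu σv : ℕ → ℕ → ℝ) (σx σy : ℕ → ℝ),
      -- level-2 positions of distinct vertices are distinct
      (∀ i i', i < k → i' < k → σx i = σx i' → i = i') ∧
      (∀ i i', i < k → i' < k → σy i = σy i' → i = i') ∧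
      (∀ i i', i < k → i' < k → σx i ≠ σy i') ∧
      (∀ i i' j, i < k → i' < k - 1 → j < n → σx i ≠ σv i' j ∧ σy i ≠ σv i' j) ∧
      -- (i) the u-blocks appear in order of i, each block ordered according to ≺
      (∀ i j i' j', i < k → j < n → i' < k → j' < n →
        (σu i j < σu i' j' ↔ (i < i' ∨ (i = i' ∧ p j < p j')))) ∧
      -- (ii) the v-blocks appear in order of i, each block ordered according to ≺
      (∀ i j i' j', i < k - 1 → j < n → i' < k - 1 → j' < n →
        (σv i j < σv i' j' ↔ (i < i' ∨ (i = i' ∧ p j < p j')))) ∧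
      -- (iii) x_i and y_i precede x_{i+1} and y_{i+1}
      (∀ i, i + 1 < k → σx i < σx (i + 1) ∧ σx i < σy (i + 1) ∧
        σy i < σx (i + 1) ∧ σy i < σy (i + 1)) ∧
      -- (iv) x_i precedes y_i iff s_{a i} ≺ s_{c i}
      (∀ i, i < k → (σx i < σy i ↔ p (a i) < p (c i))) ∧
      -- no two edges of G1 cross
      (∀ i j i' j', i < k - 1 → j < n → i' < k - 1 → j' < n →
        ¬ Cross (σu i j) (σv i j) (σu i' j') (σv i' j')) ∧
      -- no two edges of G2 cross
      (∀ i j i' j', i < k - 1 → j < n → i' < k - 1 → j' < n →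
        ¬ Cross (σu (i + 1) j) (σv i j) (σu (i' + 1) j') (σv i' j')) ∧
      -- no two edges of G3 cross
      (∀ i q i' q', i < k → q < 4 → i' < k → q' < 4 → (i, q) ≠ (i', q') →
        ¬ Cross (tripL σu a b c i q) (tripR σx σy i q)
                (tripL σu a b c i' q') (tripR σx σy i' q')) :=
  betweenness_to_simultaneous_general n k a b c p hbet
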